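/- Suppose {ν_n} is a sequence of Borel probability measures on [0,1] that converges weakly to ρ = (1/2)(δ₀+δ₁). If there exist ε₀ > 0 and a subsequence {n_j} such that for every j there exists k_j ∈ ℤ with |ν̂_{n_j}(1/2 + k_j)| ≥ ε₀, then some subsequence of {ν_n} is equi-positive. -/

import Mathlib

/-!
Near `x = 1/2` the hypothesis at `1/2 + k_j` propagates: the Fourier transform of a probability
measure on `[0,1]` is `2π`-Lipschitz, so `|ν̂_{n_j}(x + k_j)| ≥ ε₀/2` once `|x - 1/2| ≤ ε₀/(4π)`.
Away from `1/2` take `k = 0`: the transforms `ν̂_n` are equi-Lipschitz and converge pointwise to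
`ρ̂` (weak convergence tested against `e^{-2πiξx}`), hence uniformly on `[0,1]`, where
`|ρ̂(x)| = |cos πx| ≥ sin πδ` at distance `δ` from `1/2`. Dropping finitely many `n_j` handles
both regions at once.
-/

open MeasureTheory Filter Topology

/-- Fourier transform of a Borel measure on `ℝ`: `μ̂(ξ) = ∫ e^{-2πiξx} dμ(x)`. -/
noncomputable def FT (μ : Measure ℝ) (ξ : ℝ) : ℂ :=
  ∫ x, Complex.exp (-(2 * (Real.pi : ℂ) * Complex.I) * (ξ : ℂ) * (x : ℂ)) ∂μ

/-- The integral periodic zero set `Z(μ) = {ξ : μ̂(ξ + k) = 0 for all k ∈ ℤ}`. -/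
def Zset (μ : Measure ℝ) : Set ℝ := {ξ : ℝ | ∀ k : ℤ, FT μ (ξ + (k : ℝ)) = 0}

/-- `ρ = (1/2)(δ₀ + δ₁)`. -/
noncomputable def rho : Measure ℝ :=
  (2 : ENNReal)⁻¹ • Measure.dirac (0 : ℝ) + (2 : ENNReal)⁻¹ • Measure.dirac (1 : ℝ)

/-- Weak convergence of a sequence of measures, tested against bounded continuous
functions. -/
def WeakLim (s : ℕ → Measure ℝ) (ν₀ : Measure ℝ) : Prop :=
  ∀ f : BoundedContinuousFunction ℝ ℝ,
    Tendsto (fun n => ∫ x, f x ∂(s n)) atTop (𝓝 (∫ x, f x ∂ν₀))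

open Complex BoundedContinuousFunction
open scoped Real

lemma FT_eq_charFun (μ : Measure ℝ) (ξ : ℝ) : FT μ ξ = charFun μ (-(2 * π * ξ)) := by
  rw [FT, charFun_apply_real]
  congr 1 with x
  push_cast
  ring_nf

lemma tendstoUniformlyOn_of_lipschitzWith {ι X α : Type*} [PseudoMetricSpace X]
    [PseudoMetricSpace α] {p : Filter ι} {F : ι → X → α} {f : X → α} {K : NNReal}
    (hF : ∀ i, LipschitzWith K (F i)) (hFf : ∀ x, Tendsto (F · x) p (𝓝 (f x))) {s : Set X}
    (hs : IsCompact s) : TendstoUniformlyOn F f p s := by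
  have hcont : EquicontinuousOn F s :=
    (LipschitzWith.uniformEquicontinuous F K hF).equicontinuous.equicontinuousOn s
  have hunif := (EquicontinuousOn.tendsto_uniformOnFun_iff_pi' (𝔖 := {s}) (by simpa using hs)
    (by simpa using hcont) p f).2 (tendsto_pi_nhds.2 fun x => hFf x)
  exact UniformOnFun.tendsto_iff_tendstoUniformlyOn.1 hunif s rfl

lemma WeakLim.tendsto_integral_complex {s : ℕ → Measure ℝ} {ν₀ : Measure ℝ}
    [∀ n, IsFiniteMeasure (s n)] [IsFiniteMeasure ν₀] (h : WeakLim s ν₀) (g : ℝ →ᵇ ℂ) :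
    Tendsto (fun n => ∫ x, g x ∂s n) atTop (𝓝 (∫ x, g x ∂ν₀)) := by
  have hre := h (g.comp re reCLM.lipschitz)
  have him := h (g.comp im imCLM.lipschitz)
  simp_rw [← integral_re_add_im (g.integrable _)]
  exact ((continuous_ofReal.tendsto _).comp hre).add
    (((continuous_ofReal.tendsto _).comp him).mul_const _)

lemma WeakLim.tendsto_FT {s : ℕ → Measure ℝ} {ν₀ : Measure ℝ}
    [∀ n, IsFiniteMeasure (s n)] [IsFiniteMeasure ν₀] (h : WeakLim s ν₀) (ξ : ℝ) :
    Tendsto (fun n => FT (s n) ξ) atTop (𝓝 (FT ν₀ ξ)) := by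
  simp_rw [FT_eq_charFun, charFun_eq_integral_innerProbChar]
  exact h.tendsto_integral_complex _

lemma norm_exp_mul_I_sub_exp_mul_I_le (s t : ℝ) : ‖exp (s * I) - exp (t * I)‖ ≤ |s - t| := by
  have : exp (s * I) - exp (t * I) = exp (t * I) * (exp (I * ↑(s - t)) - 1) := by
    rw [mul_sub, ← exp_add]
    push_cast
    ring_nf
  rw [this, norm_mul, norm_exp_ofReal_mul_I, one_mul]
  exact Real.norm_exp_I_mul_ofReal_sub_one_le

lemma norm_charFun_sub_le {μ : Measure ℝ} [IsProbabilityMeasure μ] (hμ : ∀ᵐ x ∂μ, |x| ≤ 1)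
    (s t : ℝ) : ‖charFun μ s - charFun μ t‖ ≤ |s - t| := by
  simp_rw [charFun_eq_integral_innerProbChar]
  rw [← integral_sub ((innerProbChar s).integrable μ) ((innerProbChar t).integrable μ)]
  refine (norm_integral_le_of_norm_le_const (C := |s - t|) (hμ.mono fun x hx => ?_)).trans
    (by simp)
  simp only [innerProbChar_apply, Real.inner_apply]
  calc _ ≤ |x * s - x * t| := norm_exp_mul_I_sub_exp_mul_I_le _ _
    _ = |x| * |s - t| := by rw [← mul_sub, abs_mul]
    _ ≤ |s - t| := mul_le_of_le_one_left (abs_nonneg _) hx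

lemma norm_FT_sub_le {μ : Measure ℝ} [IsProbabilityMeasure μ] (hμ : ∀ᵐ x ∂μ, |x| ≤ 1)
    (a b : ℝ) : ‖FT μ a - FT μ b‖ ≤ 2 * π * |a - b| := by
  rw [FT_eq_charFun, FT_eq_charFun]
  refine (norm_charFun_sub_le hμ _ _).trans_eq ?_
  rw [show -(2 * π * a) - -(2 * π * b) = 2 * π * (b - a) by ring, abs_mul,
    abs_of_pos Real.two_pi_pos, abs_sub_comm]

lemma lipschitzWith_FT {μ : Measure ℝ} [IsProbabilityMeasure μ] (hμ : ∀ᵐ x ∂μ, |x| ≤ 1) :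
    LipschitzWith (2 * NNReal.pi) (FT μ) :=
  LipschitzWith.of_dist_le_mul fun a b => by simpa [dist_eq_norm] using norm_FT_sub_le hμ a b

lemma ae_abs_le_one_of_measure_compl_Icc_eq_zero {μ : Measure ℝ}
    (hμ : μ (Set.Icc 0 1)ᶜ = 0) : ∀ᵐ x ∂μ, |x| ≤ 1 := by
  filter_upwards [measure_eq_zero_iff_ae_notMem.1 hμ] with x hx
  rw [Set.notMem_compl_iff] at hx
  exact abs_le.2 ⟨by linarith [hx.1], hx.2⟩

instance isProbabilityMeasure_rho : IsProbabilityMeasure rho := by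
  constructor
  simp [rho, ENNReal.inv_two_add_inv_two]

lemma charFun_rho (t : ℝ) : charFun rho t = (1 + exp (t * I)) / 2 := by
  rw [charFun_eq_integral_innerProbChar, rho, integral_add_measure, integral_smul_measure,
    integral_smul_measure, integral_dirac, integral_dirac]
  · simp only [ENNReal.toReal_inv, ENNReal.toReal_ofNat, innerProbChar_apply, RCLike.inner_apply,
      Real.ringHom_apply, mul_zero, ofReal_zero, zero_mul, exp_zero, real_smul, ofReal_inv,
      ofReal_ofNat, mul_one]
    ring
  all_goals exact ((innerProbChar t).integrable _).smul_measure (by simp)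

lemma norm_charFun_rho (t : ℝ) : ‖charFun rho t‖ = |Real.cos (t / 2)| := by
  have : (1 + exp (t * I)) / 2 = exp ((t / 2 : ℝ) * I) * ((Real.cos (t / 2) : ℝ) : ℂ) := by
    rw [ofReal_cos, cos, mul_div_assoc', mul_add, ← exp_add, ← exp_add]
    push_cast
    rw [show (t / 2 * I + -(t / 2) * I : ℂ) = 0 by ring, exp_zero]
    ring_nf
  rw [charFun_rho, this, norm_mul, norm_exp_ofReal_mul_I, one_mul, norm_real, Real.norm_eq_abs]

lemma sin_pi_mul_le_abs_cos_pi_mul {δ x : ℝ} (hδ : 0 ≤ δ) (hx : x ∈ Set.Icc (0 : ℝ) 1)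
    (hδx : δ ≤ |x - 1 / 2|) : Real.sin (π * δ) ≤ |Real.cos (π * x)| := by
  have hπ := Real.pi_pos
  rcases le_abs'.1 hδx with h | h
  · calc Real.sin (π * δ) = Real.cos (π * (1 / 2 - δ)) := by
          rw [mul_sub, ← Real.cos_pi_div_two_sub]; ring_nf
      _ ≤ Real.cos (π * x) :=
          Real.cos_le_cos_of_nonneg_of_le_pi (by nlinarith [hx.1]) (by nlinarith) (by nlinarith)
      _ ≤ _ := le_abs_self _
  · calc Real.sin (π * δ) = -Real.cos (π * (1 / 2 + δ)) := by
          rw [show π * (1 / 2 + δ) = π * δ + π / 2 by ring,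
            Real.cos_add_pi_div_two, neg_neg]
      _ ≤ -Real.cos (π * x) := by
          gcongr
          exact Real.cos_le_cos_of_nonneg_of_le_pi (by nlinarith) (by nlinarith [hx.2])
            (by nlinarith)
      _ ≤ _ := neg_le_abs _

lemma norm_FT_rho (ξ : ℝ) : ‖FT rho ξ‖ = |Real.cos (π * ξ)| := by
  rw [FT_eq_charFun, norm_charFun_rho, neg_div, Real.cos_neg]
  ring_nf

/-- If probability measures `ν_n` on `[0,1]` converge weakly to `ρ` and along a
subsequence `|ν̂_{n_j}(1/2 + k_j)| ≥ ε₀` for some integers `k_j`, then some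
subsequence of `ν_n` is equi-positive. -/
theorem stmt15 (ν : ℕ → Measure ℝ)
    (hprob : ∀ n, IsProbabilityMeasure (ν n))
    (hsupp : ∀ n, ν n (Set.Icc (0 : ℝ) 1)ᶜ = 0)
    (hconv : WeakLim ν rho)
    (hsub : ∃ ε₀ > (0 : ℝ), ∃ n : ℕ → ℕ, StrictMono n ∧
      ∀ j : ℕ, ∃ k : ℤ, ε₀ ≤ ‖FT (ν (n j)) (1/2 + (k : ℝ))‖) :
    ∃ m : ℕ → ℕ, StrictMono m ∧ ∃ ε > (0 : ℝ), ∀ x ∈ Set.Icc (0 : ℝ) 1, ∀ j : ℕ,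
      ∃ k : ℤ, ε ≤ ‖FT (ν (m j)) (x + (k : ℝ))‖ := by
  obtain ⟨ε₀, hε₀, n, hn, hk⟩ := hsub
  have hν := fun k => ae_abs_le_one_of_measure_compl_Icc_eq_zero (hsupp k)
  set δ := min (ε₀ / (4 * π)) (1 / 2)
  have hδ : 0 < δ := lt_min (by positivity) one_half_pos
  have hδε : 2 * π * δ ≤ ε₀ / 2 := by
    have := min_le_left (ε₀ / (4 * π)) (1 / 2)
    rw [le_div_iff₀ (by positivity)] at this
    linarith
  have hc : 0 < Real.sin (π * δ) := by
    have : δ ≤ 1 / 2 := min_le_right _ _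
    exact Real.sin_pos_of_pos_of_lt_pi (by positivity) (by nlinarith [Real.pi_pos])
  have hunif : TendstoUniformlyOn (fun k => FT (ν k)) (FT rho) atTop (Set.Icc 0 1) :=
    tendstoUniformlyOn_of_lipschitzWith (fun k => lipschitzWith_FT (hν k)) hconv.tendsto_FT
      isCompact_Icc
  obtain ⟨N, hN⟩ := eventually_atTop.1 (Metric.tendstoUniformlyOn_iff.1 hunif _ (half_pos hc))
  refine ⟨fun j => n (j + N), hn.comp add_left_strictMono, _,
    lt_min (half_pos hε₀) (half_pos hc), fun x hx j => ?_⟩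
  rcases lt_or_ge |x - 1 / 2| δ with hnear | hfar
  · obtain ⟨k, hk⟩ := hk (j + N)
    refine ⟨k, (min_le_left _ _).trans ?_⟩
    have hlip := norm_FT_sub_le (hν (n (j + N))) (1 / 2 + k) (x + k)
    rw [show (1 / 2 + k : ℝ) - (x + k) = -(x - 1 / 2) by ring, abs_neg] at hlip
    have hnear' : 2 * π * |x - 1 / 2| ≤ 2 * π * δ := by gcongr
    linarith [norm_sub_norm_le (FT (ν (n (j + N))) (1 / 2 + k)) (FT (ν (n (j + N))) (x + k))]
  · refine ⟨0, (min_le_right _ _).trans ?_⟩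
    have hρ : Real.sin (π * δ) ≤ ‖FT rho x‖ :=
      norm_FT_rho x ▸ sin_pi_mul_le_abs_cos_pi_mul hδ.le hx hfar
    have hdist := hN (n (j + N)) ((Nat.le_add_left N j).trans hn.le_apply) x hx
    rw [dist_eq_norm] at hdist
    rw [Int.cast_zero, add_zero]
    linarith [norm_sub_norm_le (FT rho x) (FT (ν (n (j + N))) x)]
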